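/- arXiv:1208.2417 — 2 statements merged into one kernel-verified Lean document; each statement's English description precedes it below -/
import Mathlib

section
/- Let N ≥ 2 and 1 ≤ K < N be integers, and let X be a nonempty finite set of binary vectors in {0,1}^N each having at least K ones (i.e., X ⊆ ∪_{i=K}^{N} B_i). Then for every probability distribution p on X such that the information matrix M(p) is invertible, trace(M(p)⁻¹) ≥ N/K + N·(N−1)²/(N−K). -/
/-- `BK N K` is the set of binary vectors in `ℝ^N` with exactly `K` entries
equal to `1`. -/
noncomputable def BK (N K : ℕ) : Finset (Fin N → ℝ) :=
  (Finset.univ.powersetCard K : Finset (Finset (Fin N))).image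
    (fun s => fun i => if i ∈ s then (1 : ℝ) else 0)

/-- The information matrix `M(p) = ∑_{x ∈ X} (p(x)/(xᵀx)) · x·xᵀ`. -/
noncomputable def infoMatrix {N : ℕ} (X : Finset (Fin N → ℝ)) (p : (Fin N → ℝ) → ℝ) :
    Matrix (Fin N) (Fin N) ℝ :=
  ∑ x ∈ X, (p x / ∑ i, x i ^ 2) • Matrix.vecMulVec x x

/-!
`M = M(p)` is positive definite with trace `∑ p = 1`, and for a binary `x` one has
`(xᵀ𝟙)² / xᵀx = xᵀx ≥ K`, so `β := 𝟙ᵀ M 𝟙 ≥ K`. Let `λⱼ` be the eigenvalues of `M` and `cⱼ` the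
coordinates of `𝟙` in an orthonormal eigenbasis, so `∑ cⱼ² = N` and `cⱼ² ≤ N`. Splitting
`N ∑ 1/λⱼ = ∑ cⱼ²/λⱼ + ∑ (N - cⱼ²)/λⱼ` and applying Cauchy–Schwarz to each sum gives
`trace M⁻¹ ≥ N/β + N(N-1)²/(N-β)`, and the right-hand side is increasing in `β ∈ [1, N)`.
-/

open Matrix

noncomputable def traceBound (n b : ℝ) : ℝ := n / b + n * (n - 1) ^ 2 / (n - b)

theorem traceBound_mono {n a b : ℝ} (ha : 1 ≤ a) (hab : a ≤ b) (hbn : b < n) :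
    traceBound n a ≤ traceBound n b := by
  have ha₀ : 0 < a := by linarith
  have hb₀ : 0 < b := by linarith
  have hna : 0 < n - a := by linarith
  have hnb : 0 < n - b := by linarith
  have hcross : (n - b) * (n - a) ≤ ((n - 1) * b) * ((n - 1) * a) := by
    apply mul_le_mul (by nlinarith) (by nlinarith) hna.le (by nlinarith)
  unfold traceBound
  rw [div_add_div _ _ (by positivity) hna.ne', div_add_div _ _ (by positivity) hnb.ne',
    div_le_div_iff₀ (by positivity) (by positivity)]
  nlinarith [mul_nonneg (sub_nonneg.2 hab) (sub_nonneg.2 hcross)]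

section Weights

variable {ι : Type*} [Fintype ι] {lam c : ι → ℝ}

theorem sq_sum_le_sum_mul_mul_sum_div (w : ι → ℝ) (hw : ∀ j, 0 ≤ w j) (hl : ∀ j, 0 < lam j) :
    (∑ j, w j) ^ 2 ≤ (∑ j, w j * lam j) * ∑ j, w j / lam j :=
  Finset.sum_sq_le_sum_mul_sum_of_sq_le_mul _
    (fun j _ => mul_nonneg (hw j) (hl j).le) (fun j _ => div_nonneg (hw j) (hl j).le)
    (fun j _ => le_of_eq (by field_simp [(hl j).ne']))

theorem sq_le_card_of_sum_sq_eq_card (hc : ∑ j, c j ^ 2 = Fintype.card ι) (j : ι) :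
    c j ^ 2 ≤ Fintype.card ι :=
  hc ▸ Finset.single_le_sum (fun i _ => sq_nonneg (c i)) (Finset.mem_univ j)

theorem sum_mul_sq_lt_card (hl : ∀ j, 0 < lam j) (hsum : ∑ j, lam j = 1)
    (hc : ∑ j, c j ^ 2 = Fintype.card ι) (hcard : 2 ≤ Fintype.card ι) :
    ∑ j, lam j * c j ^ 2 < Fintype.card ι := by
  have h₂ : (2 : ℝ) ≤ Fintype.card ι := by exact_mod_cast hcard
  set n : ℝ := (Fintype.card ι : ℝ)
  obtain ⟨j₀, hj₀⟩ : ∃ j, c j ^ 2 < n := by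
    by_contra! h
    have : n = n * n := by
      simpa [le_antisymm (sq_le_card_of_sum_sq_eq_card hc _) (h _)] using hc.symm
    nlinarith
  have hpos : 0 < ∑ j, lam j * (n - c j ^ 2) :=
    Finset.sum_pos'
      (fun j _ => mul_nonneg (hl j).le (sub_nonneg.2 (sq_le_card_of_sum_sq_eq_card hc j)))
      ⟨j₀, Finset.mem_univ _, mul_pos (hl j₀) (sub_pos.2 hj₀)⟩
  simp only [mul_sub, Finset.sum_sub_distrib, ← Finset.sum_mul, hsum, one_mul] at hpos
  linarith

theorem traceBound_le_sum_inv (hl : ∀ j, 0 < lam j) (hsum : ∑ j, lam j = 1)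
    (hc : ∑ j, c j ^ 2 = Fintype.card ι) (hβ : 0 < ∑ j, lam j * c j ^ 2)
    (hβn : ∑ j, lam j * c j ^ 2 < Fintype.card ι) :
    traceBound (Fintype.card ι) (∑ j, lam j * c j ^ 2) ≤ ∑ j, (lam j)⁻¹ := by
  set n : ℝ := (Fintype.card ι : ℝ)
  set β := ∑ j, lam j * c j ^ 2
  have hn : 0 < n := hβ.trans hβn
  have hnβ : 0 < n - β := sub_pos.2 hβn
  have h₁ : n ^ 2 ≤ β * ∑ j, c j ^ 2 / lam j := by
    simpa only [hc, mul_comm (c _ ^ 2)] using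
      sq_sum_le_sum_mul_mul_sum_div (fun j => c j ^ 2) (fun j => sq_nonneg _) hl
  have h₂ : (n * (n - 1)) ^ 2 ≤ (n - β) * ∑ j, (n - c j ^ 2) / lam j := by
    have := sq_sum_le_sum_mul_mul_sum_div (fun j => n - c j ^ 2)
      (fun j => sub_nonneg.2 (sq_le_card_of_sum_sq_eq_card hc j)) hl
    simp only [sub_mul, Finset.sum_sub_distrib, ← Finset.mul_sum, hsum, hc, Finset.sum_const,
      Finset.card_univ, nsmul_eq_mul, mul_comm (c _ ^ 2)] at this
    convert this using 2 <;> ring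
  have hsplit : n * ∑ j, (lam j)⁻¹ = ∑ j, c j ^ 2 / lam j + ∑ j, (n - c j ^ 2) / lam j := by
    rw [← Finset.sum_add_distrib, Finset.mul_sum]
    exact Finset.sum_congr rfl fun j _ => by ring
  have : n * traceBound n β ≤ n * ∑ j, (lam j)⁻¹ := by
    rw [hsplit]
    calc n * traceBound n β = n ^ 2 / β + (n * (n - 1)) ^ 2 / (n - β) := by
          unfold traceBound; field_simp
      _ ≤ _ := add_le_add ((div_le_iff₀' hβ).2 h₁) ((div_le_iff₀' hnβ).2 h₂)
  exact le_of_mul_le_mul_left this hn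

end Weights

section Spectral

variable {ι : Type*} [Fintype ι] [DecidableEq ι]

theorem Matrix.PosDef.exists_spectral_coordinates {M : Matrix ι ι ℝ} (hM : M.PosDef)
    (u : ι → ℝ) :
    ∃ lam c : ι → ℝ, (∀ j, 0 < lam j) ∧ M.trace = ∑ j, lam j ∧
      M⁻¹.trace = ∑ j, (lam j)⁻¹ ∧ u ⬝ᵥ M *ᵥ u = ∑ j, lam j * c j ^ 2 ∧
      ∑ j, c j ^ 2 = u ⬝ᵥ u := by
  set U : Matrix ι ι ℝ := (hM.1.eigenvectorUnitary : Matrix ι ι ℝ)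
  set lam := hM.1.eigenvalues
  have hUU : star U * U = 1 := Unitary.coe_star_mul_self _
  have hUU' : U * star U = 1 := Unitary.coe_mul_star_self _
  have hM_eq : M = U * diagonal lam * star U := by
    simpa using hM.1.spectral_theorem
  have hM_inv : M⁻¹ = U * diagonal lam⁻¹ * star U := by
    refine inv_eq_left_inv ?_
    have hD : diagonal lam⁻¹ * diagonal lam = 1 := by
      rw [diagonal_mul_diagonal, ← diagonal_one]
      exact congrArg diagonal (funext fun j => inv_mul_cancel₀ (hM.eigenvalues_pos j).ne')
    calc U * diagonal lam⁻¹ * star U * M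
        = U * (diagonal lam⁻¹ * (star U * U) * diagonal lam) * star U := by
          rw [hM_eq]; simp only [Matrix.mul_assoc]
      _ = 1 := by rw [hUU, Matrix.mul_one, hD, Matrix.mul_one, hUU']
  have hvecMul : ∀ (A : Matrix ι ι ℝ) v, v ᵥ* A = star A *ᵥ v := fun A v => by
    rw [star_eq_conjTranspose, conjTranspose_eq_transpose_of_trivial, mulVec_transpose]
  refine ⟨lam, star U *ᵥ u, hM.eigenvalues_pos, by simpa using hM.1.trace_eq_sum_eigenvalues,
    ?_, ?_, ?_⟩
  · rw [hM_inv, trace_mul_cycle, hUU, Matrix.one_mul, trace_diagonal]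
    rfl
  · rw [hM_eq, ← mulVec_mulVec, ← mulVec_mulVec, dotProduct_mulVec, hvecMul]
    simp only [dotProduct, mulVec_diagonal]
    exact Finset.sum_congr rfl fun j _ => by ring
  · calc ∑ j, (star U *ᵥ u) j ^ 2 = (star U *ᵥ u) ⬝ᵥ (star U *ᵥ u) := by
          simp only [dotProduct, sq]
      _ = u ⬝ᵥ u := by
          rw [dotProduct_mulVec, hvecMul, star_star, mulVec_mulVec, hUU', one_mulVec]

end Spectral

section InfoMatrix

variable {N : ℕ} (X : Finset (Fin N → ℝ)) (p : (Fin N → ℝ) → ℝ)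

theorem infoMatrix_posSemidef (hp : ∀ x ∈ X, 0 ≤ p x) : (infoMatrix X p).PosSemidef :=
  posSemidef_sum X fun x hx => by
    simpa using (posSemidef_vecMulVec_self_star x).smul
      (div_nonneg (hp x hx) (Finset.sum_nonneg fun i _ => sq_nonneg (x i)))

theorem trace_infoMatrix (hX : ∀ x ∈ X, x ≠ 0) : (infoMatrix X p).trace = ∑ x ∈ X, p x := by
  rw [infoMatrix, trace_sum]
  refine Finset.sum_congr rfl fun x hx => ?_
  have hx : ∑ i, x i ^ 2 ≠ 0 := by
    simpa only [dotProduct, sq] using dotProduct_self_eq_zero.not.2 (hX x hx)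
  rw [trace_smul, trace_vecMulVec, smul_eq_mul]
  simp only [dotProduct, ← sq]
  field_simp

theorem dotProduct_infoMatrix_mulVec (v : Fin N → ℝ) :
    v ⬝ᵥ infoMatrix X p *ᵥ v = ∑ x ∈ X, p x / (∑ i, x i ^ 2) * (x ⬝ᵥ v) ^ 2 := by
  simp only [infoMatrix, sum_mulVec, smul_mulVec, vecMulVec_mulVec, op_smul_eq_smul,
    dotProduct_sum, dotProduct_smul, smul_eq_mul]
  exact Finset.sum_congr rfl fun x _ => by rw [dotProduct_comm v x]; ring

end InfoMatrix

section Binary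

variable {N i : ℕ} {x : Fin N → ℝ}

theorem sum_of_mem_BK (hx : x ∈ BK N i) : ∑ j, x j = i := by
  obtain ⟨s, hs, rfl⟩ := Finset.mem_image.1 hx
  simp [(Finset.mem_powersetCard.1 hs).2]

theorem sum_sq_of_mem_BK (hx : x ∈ BK N i) : ∑ j, x j ^ 2 = i := by
  rw [← sum_of_mem_BK hx]
  obtain ⟨s, -, rfl⟩ := Finset.mem_image.1 hx
  exact Finset.sum_congr rfl fun j _ => by dsimp only; split_ifs <;> norm_num

theorem ne_zero_of_mem_BK (hx : x ∈ BK N i) (hi : i ≠ 0) : x ≠ 0 := by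
  rintro rfl
  simpa [hi] using (sum_of_mem_BK hx).symm

theorem le_one_dotProduct_infoMatrix_mulVec_one {K : ℕ} (X : Finset (Fin N → ℝ))
    (p : (Fin N → ℝ) → ℝ) (hX : ∀ x ∈ X, ∃ i, K ≤ i ∧ x ∈ BK N i) (hp0 : ∀ x ∈ X, 0 ≤ p x)
    (hp1 : ∑ x ∈ X, p x = 1) :
    (K : ℝ) ≤ 1 ⬝ᵥ infoMatrix X p *ᵥ 1 := by
  rw [dotProduct_infoMatrix_mulVec]
  calc (K : ℝ) = ∑ x ∈ X, p x * K := by rw [← Finset.sum_mul, hp1, one_mul]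
    _ ≤ ∑ x ∈ X, p x / (∑ i, x i ^ 2) * (x ⬝ᵥ 1) ^ 2 := Finset.sum_le_sum fun x hx => by
      obtain ⟨i, hKi, hxi⟩ := hX x hx
      have hpi : p x / i * (i : ℝ) ^ 2 = p x * i := by
        rcases eq_or_ne (i : ℝ) 0 with h | h
        · simp [h]
        · field_simp
      rw [dotProduct_one, sum_of_mem_BK hxi, sum_sq_of_mem_BK hxi, hpi]
      exact mul_le_mul_of_nonneg_left (by exact_mod_cast hKi) (hp0 x hx)

end Binary

theorem lower_bound_binary_at_least_K_general (N K : ℕ) (hK1 : 1 ≤ K) (hKN : K < N)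
    (X : Finset (Fin N → ℝ))
    (hX : ∀ x ∈ X, ∃ i ∈ Finset.Icc K N, x ∈ BK N i)
    (p : (Fin N → ℝ) → ℝ) (hp0 : ∀ x ∈ X, 0 ≤ p x) (hp1 : ∑ x ∈ X, p x = 1)
    (hinv : IsUnit (infoMatrix X p)) :
    (N : ℝ) / K + N * ((N : ℝ) - 1) ^ 2 / ((N : ℝ) - K)
      ≤ (infoMatrix X p)⁻¹.trace := by
  have hX' : ∀ x ∈ X, ∃ i, K ≤ i ∧ x ∈ BK N i := fun x hx =>
    (hX x hx).imp fun i hi => ⟨(Finset.mem_Icc.1 hi.1).1, hi.2⟩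
  have hM : (infoMatrix X p).PosDef :=
    (infoMatrix_posSemidef X p hp0).posDef_iff_isUnit.2 hinv
  have htr : (infoMatrix X p).trace = 1 := by
    rw [trace_infoMatrix X p fun x hx => ?_, hp1]
    obtain ⟨i, hKi, hxi⟩ := hX' x hx
    exact ne_zero_of_mem_BK hxi (by omega)
  obtain ⟨lam, c, hl, hsum, htr_inv, hβ, hc⟩ := hM.exists_spectral_coordinates 1
  have hKβ := le_one_dotProduct_infoMatrix_mulVec_one X p hX' hp0 hp1
  rw [htr, eq_comm] at hsum
  rw [hβ] at hKβ
  replace hc : ∑ j, c j ^ 2 = Fintype.card (Fin N) := by simpa using hc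
  have hβN := sum_mul_sq_lt_card hl hsum hc (by simp only [Fintype.card_fin]; omega)
  have hK : (1 : ℝ) ≤ K := by exact_mod_cast hK1
  have hbound := traceBound_le_sum_inv hl hsum hc (by linarith) hβN
  simp only [Fintype.card_fin] at hβN hbound
  rw [htr_inv]
  exact (traceBound_mono hK hKβ hβN).trans hbound

/-- if `X ⊆ ∪_{i=K}^{N} B_i` is a nonempty finite set of binary
vectors each having at least `K` ones, then every probability distribution `p`
on `X` with invertible information matrix satisfies
`trace(M(p)⁻¹) ≥ N/K + N(N-1)²/(N-K)`. -/
theorem lower_bound_binary_at_least_K (N K : ℕ) (hN : 2 ≤ N) (hK1 : 1 ≤ K) (hKN : K < N)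
    (X : Finset (Fin N → ℝ)) (hXne : X.Nonempty)
    (hX : ∀ x ∈ X, ∃ i ∈ Finset.Icc K N, x ∈ BK N i)
    (p : (Fin N → ℝ) → ℝ) (hp0 : ∀ x ∈ X, 0 ≤ p x) (hp1 : ∑ x ∈ X, p x = 1)
    (hinv : IsUnit (infoMatrix X p)) :
    (N : ℝ) / K + N * ((N : ℝ) - 1) ^ 2 / ((N : ℝ) - K)
      ≤ (infoMatrix X p)⁻¹.trace :=
  lower_bound_binary_at_least_K_general N K hK1 hKN X hX p hp0 hp1 hinv
end

section
/- Let N ≥ 2 and 1 ≤ K < N be integers and let X = ∪_{i=K}^{N} B_i be the set of all binary vectors in {0,1}^N with at least K ones. Then the probability distribution on X that is uniform on B_K and assigns zero probability to all other elements of X minimizes trace(M(p)⁻¹) over all probability distributions p on X for which M(p) is invertible, and the minimal value equals N/K + N·(N−1)²/(N−K). -/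
/-!
Write `J` for the all-ones matrix. For the uniform design `q` on `B_K`, counting the `K`-sets
that contain a given one- or two-element set shows `M(q) = c₁ I + c₂ J`, and its inverse `A` has
the same form.
For any design `p` with `M = M(p)` invertible, positive semidefiniteness of
`(M⁻¹ - A) M (M⁻¹ - A)` gives `tr M⁻¹ ≥ 2 tr A - tr (A M A)`, and
`tr (A M A) = ∑ p(x) ‖A x‖² / ‖x‖²`. For `x ∈ B_m` the ratio `‖A x‖² / ‖x‖²` is nonincreasing
in `m ≥ K` and equals `tr A` at `m = K`, so `tr (A M A) ≤ tr A` and `tr M⁻¹ ≥ tr A = tr M(q)⁻¹`.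
-/
open Finset Matrix

section InfoMatrix

variable {N : ℕ}

theorem posSemidef_infoMatrix {X : Finset (Fin N → ℝ)} {p : (Fin N → ℝ) → ℝ}
    (hp : ∀ x ∈ X, 0 ≤ p x) : (infoMatrix X p).PosSemidef :=
  posSemidef_sum X fun x hx => by
    simpa using (posSemidef_vecMulVec_self_star x).smul (div_nonneg (hp x hx) (by positivity))

theorem trace_mul_infoMatrix_mul_transpose (A : Matrix (Fin N) (Fin N) ℝ)
    (X : Finset (Fin N → ℝ)) (p : (Fin N → ℝ) → ℝ) :
    (A * infoMatrix X p * Aᵀ).trace = ∑ x ∈ X, p x / (∑ i, x i ^ 2) * ∑ i, (A *ᵥ x) i ^ 2 := by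
  simp only [infoMatrix, mul_sum, sum_mul, trace_sum, Matrix.mul_smul, Matrix.smul_mul,
    mul_vecMulVec, vecMulVec_mul, vecMul_transpose, trace_smul, trace_vecMulVec, dotProduct, sq,
    smul_eq_mul]

theorem infoMatrix_ite_mem {X S : Finset (Fin N → ℝ)} (hS : S ⊆ X)
    [DecidablePred (· ∈ S)] (c : ℝ) :
    infoMatrix X (fun x => if x ∈ S then c else 0) = infoMatrix S (fun _ => c) := by
  rw [infoMatrix, infoMatrix, ← sum_subset hS]
  · exact sum_congr rfl fun x hx => by rw [if_pos hx]
  · intro x _ hx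
    rw [if_neg hx, zero_div, zero_smul]

end InfoMatrix

/-- Expanding `0 ≤ tr ((M⁻¹ - A) M (M⁻¹ - A))`. -/
theorem Matrix.PosSemidef.two_mul_trace_sub_le_trace_inv {n : Type*} [Fintype n] [DecidableEq n]
    {M A : Matrix n n ℝ} (hM : M.PosSemidef) (hMu : IsUnit M) (hA : Aᵀ = A) :
    2 * A.trace - (A * M * A).trace ≤ M⁻¹.trace := by
  have hdet : IsUnit M.det := (isUnit_iff_isUnit_det M).mp hMu
  have hsymm : (M⁻¹ - A)ᴴ = M⁻¹ - A := by
    rw [conjTranspose_eq_transpose_of_trivial, transpose_sub, transpose_nonsing_inv, hA,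
      ← conjTranspose_eq_transpose_of_trivial, hM.isHermitian.eq]
  have hexpand : (M⁻¹ - A) * M * (M⁻¹ - A) = M⁻¹ - A - A + A * M * A := by
    have := mul_nonsing_inv M hdet
    have := nonsing_inv_mul M hdet
    simp only [sub_mul, mul_sub, mul_assoc, *]
    noncomm_ring
  have := (hM.mul_mul_conjTranspose_same (M⁻¹ - A)).trace_nonneg
  rw [hsymm, hexpand] at this
  simp only [trace_add, trace_sub] at this
  linarith

theorem two_mul_trace_sub_le_trace_inv_infoMatrix {N : ℕ} {X : Finset (Fin N → ℝ)}
    {p : (Fin N → ℝ) → ℝ} {A : Matrix (Fin N) (Fin N) ℝ} {V : ℝ} (hA : Aᵀ = A)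
    (hp : ∀ x ∈ X, 0 ≤ p x) (hp1 : ∑ x ∈ X, p x = 1) (hM : IsUnit (infoMatrix X p))
    (hV : ∀ x ∈ X, (∑ i, (A *ᵥ x) i ^ 2) / (∑ i, x i ^ 2) ≤ V) :
    2 * A.trace - V ≤ (infoMatrix X p)⁻¹.trace := by
  have hAMA : (A * infoMatrix X p * A).trace ≤ V := by
    have htrace := trace_mul_infoMatrix_mul_transpose A X p
    rw [hA] at htrace
    rw [htrace]
    calc ∑ x ∈ X, p x / (∑ i, x i ^ 2) * ∑ i, (A *ᵥ x) i ^ 2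
        = ∑ x ∈ X, p x * ((∑ i, (A *ᵥ x) i ^ 2) / (∑ i, x i ^ 2)) := by
          simp only [div_mul_eq_mul_div, mul_div_assoc]
      _ ≤ ∑ x ∈ X, p x * V := sum_le_sum fun x hx => mul_le_mul_of_nonneg_left (hV x hx) (hp x hx)
      _ = V := by rw [← sum_mul, hp1, one_mul]
  linarith [(posSemidef_infoMatrix hp).two_mul_trace_sub_le_trace_inv hM hA]

section CompletelySymmetric

variable (ι : Type*) [DecidableEq ι]

def completelySymmetric (a b : ℝ) : Matrix ι ι ℝ := a • 1 + b • of fun _ _ => 1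

variable {ι}

theorem completelySymmetric_apply (a b : ℝ) (i j : ι) :
    completelySymmetric ι a b i j = if i = j then a + b else b := by
  by_cases h : i = j <;> simp [completelySymmetric, one_apply, h]

theorem transpose_completelySymmetric (a b : ℝ) :
    (completelySymmetric ι a b)ᵀ = completelySymmetric ι a b := by
  ext i j
  simp only [transpose_apply, completelySymmetric_apply, eq_comm]

theorem completelySymmetric_mul [Fintype ι] (a b c d : ℝ) :
    completelySymmetric ι a b * completelySymmetric ι c d =
      completelySymmetric ι (a * c) (a * d + b * c + Fintype.card ι * b * d) := by
  have hJ : (of fun _ _ => 1 : Matrix ι ι ℝ) * of (fun _ _ => 1) =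
      (Fintype.card ι : ℝ) • of fun _ _ => 1 := by
    ext i j
    simp [mul_apply]
  simp only [completelySymmetric, add_mul, mul_add, Matrix.smul_mul, Matrix.mul_smul, one_mul,
    mul_one, hJ, smul_smul]
  module

theorem trace_completelySymmetric [Fintype ι] (a b : ℝ) :
    (completelySymmetric ι a b).trace = Fintype.card ι * (a + b) := by
  simp [trace, completelySymmetric_apply, mul_add]

theorem completelySymmetric_mulVec [Fintype ι] (a b : ℝ) (x : ι → ℝ) (i : ι) :
    (completelySymmetric ι a b *ᵥ x) i = a * x i + b * ∑ j, x j := by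
  simp only [completelySymmetric, add_mulVec, smul_mulVec, one_mulVec, Pi.add_apply,
    Pi.smul_apply, smul_eq_mul]
  simp [mulVec, dotProduct]

end CompletelySymmetric

theorem Finset.card_filter_powersetCard_univ_subset_mul_choose {α : Type*} [Fintype α]
    [DecidableEq α] (s : Finset α) (n : ℕ) :
    #{t ∈ powersetCard n univ | s ⊆ t} * (Fintype.card α).choose #s =
      (Fintype.card α).choose n * n.choose #s := by
  by_cases hsn : #s ≤ n
  · rw [card_filter_powersetCard_subset s univ n (subset_univ s) hsn, Nat.choose_mul hsn,
      card_univ, mul_comm]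
  · have hempty : (powersetCard n univ).filter (s ⊆ ·) = ∅ := filter_eq_empty_iff.mpr
      fun t ht hst => hsn ((card_le_card hst).trans (mem_powersetCard_univ.mp ht).le)
    rw [hempty, Nat.choose_eq_zero_of_lt (not_le.mp hsn), card_empty, zero_mul, mul_zero]

section IndicatorVec

variable {ι : Type*} [DecidableEq ι]

def indicatorVec (s : Finset ι) : ι → ℝ := fun i => if i ∈ s then 1 else 0

theorem indicatorVec_injective : Function.Injective (indicatorVec (ι := ι)) := by
  intro s t h
  ext i
  have hi := congrFun h i
  simp only [indicatorVec] at hi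
  split_ifs at hi <;> simp_all

theorem indicatorVec_mul_indicatorVec (s : Finset ι) (i j : ι) :
    indicatorVec s i * indicatorVec s j = if {i, j} ⊆ s then 1 else 0 := by
  simp only [indicatorVec, insert_subset_iff, singleton_subset_iff, ite_zero_mul_ite_zero,
    mul_one]

variable [Fintype ι]

theorem sum_indicatorVec (s : Finset ι) : ∑ i, indicatorVec s i = #s := by
  simp [indicatorVec]

theorem sum_indicatorVec_sq (s : Finset ι) : ∑ i, indicatorVec s i ^ 2 = #s := by
  simp [indicatorVec, ite_pow]

theorem sum_completelySymmetric_mulVec_indicatorVec_sq (a b : ℝ) (s : Finset ι) :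
    ∑ i, (completelySymmetric ι a b *ᵥ indicatorVec s) i ^ 2 =
      #s * (a ^ 2 + (2 * a * b + Fintype.card ι * b ^ 2) * #s) := by
  have hsq : ∀ i, (a * indicatorVec s i + b * #s) ^ 2 =
      a ^ 2 * indicatorVec s i ^ 2 + 2 * a * b * #s * indicatorVec s i + b ^ 2 * #s ^ 2 :=
    fun i => by ring
  simp only [completelySymmetric_mulVec, sum_indicatorVec, hsq, sum_add_distrib, ← mul_sum,
    sum_indicatorVec_sq, sum_const, card_univ, nsmul_eq_mul]
  ring

end IndicatorVec

section BK

variable {N K : ℕ}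

theorem BK_eq_image : BK N K = (powersetCard K univ).image indicatorVec := rfl

theorem card_BK : #(BK N K) = N.choose K := by
  rw [BK_eq_image, card_image_of_injective _ indicatorVec_injective, card_powersetCard,
    card_univ, Fintype.card_fin]

theorem exists_indicatorVec_of_mem_biUnion_BK {x : Fin N → ℝ}
    (hx : x ∈ (Icc K N).biUnion (BK N)) : ∃ s : Finset (Fin N), K ≤ #s ∧ x = indicatorVec s := by
  obtain ⟨i, hi, hx⟩ := mem_biUnion.mp hx
  obtain ⟨s, hs, rfl⟩ := mem_image.mp hx
  exact ⟨s, (mem_powersetCard_univ.mp hs).symm ▸ (mem_Icc.mp hi).1, rfl⟩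

theorem infoMatrix_BK_const_apply (c : ℝ) (a b : Fin N) :
    infoMatrix (BK N K) (fun _ => c) a b = c / K * #{s ∈ powersetCard K univ | {a, b} ⊆ s} := by
  rw [BK_eq_image, infoMatrix, sum_image fun s _ t _ h => indicatorVec_injective h,
    Matrix.sum_apply, ← sum_boole, mul_sum]
  refine sum_congr rfl fun s hs => ?_
  rw [Matrix.smul_apply, vecMulVec_apply, indicatorVec_mul_indicatorVec, sum_indicatorVec_sq,
    mem_powersetCard_univ.mp hs, smul_eq_mul]

theorem infoMatrix_BK_uniform (hK : 0 < K) (hKN : K ≤ N) (hN : 2 ≤ N) :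
    infoMatrix (BK N K) (fun _ => (N.choose K : ℝ)⁻¹) =
      completelySymmetric (Fin N) ((N - K) / (N * (N - 1))) ((K - 1) / (N * (N - 1))) := by
  have hC : (N.choose K : ℝ) ≠ 0 := by exact_mod_cast (Nat.choose_pos hKN).ne'
  have hN1 : (N : ℝ) - 1 ≠ 0 := by
    have : (2 : ℝ) ≤ N := by exact_mod_cast hN
    linarith
  have hK0 : (K : ℝ) ≠ 0 := by exact_mod_cast hK.ne'
  have hN0 : (N : ℝ) ≠ 0 := by positivity
  ext a b
  have hcount := congrArg (Nat.cast : ℕ → ℝ)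
    (card_filter_powersetCard_univ_subset_mul_choose {a, b} K)
  rw [infoMatrix_BK_const_apply, completelySymmetric_apply]
  rw [Fintype.card_fin] at hcount
  split_ifs with hab
  · subst hab
    simp only [insert_eq_self.mpr (mem_singleton_self a), card_singleton, Nat.choose_one_right,
      Nat.cast_mul] at hcount ⊢
    field_simp
    linear_combination (N - 1 : ℝ) * hcount
  · simp only [card_pair hab, Nat.cast_mul, Nat.cast_choose_two] at hcount
    field_simp
    linear_combination 2 * hcount

end BK

section UniformDesign

variable {N K : ℕ}

/-- The inverse of `M(q) = ((N - K) I + (K - 1) J) / (N (N - 1))`, `q` uniform on `B_K`. -/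
noncomputable def invInfoUniformBK (N K : ℕ) : Matrix (Fin N) (Fin N) ℝ :=
  completelySymmetric (Fin N) (N * (N - 1) / (N - K)) (-(N * (K - 1)) / (K * (N - K)))

theorem infoMatrix_BK_uniform_mul_invInfoUniformBK (hK : 0 < K) (hKN : K < N) :
    infoMatrix (BK N K) (fun _ => (N.choose K : ℝ)⁻¹) * invInfoUniformBK N K = 1 := by
  have hK0 : (0 : ℝ) < K := by exact_mod_cast hK
  have hNK : (K : ℝ) < N := by exact_mod_cast hKN
  have hN1 : (N : ℝ) - 1 ≠ 0 := by linarith [(by exact_mod_cast hK : (1 : ℝ) ≤ K)]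
  have hNK0 : (N : ℝ) - K ≠ 0 := by linarith
  have hN0 : (N : ℝ) ≠ 0 := by linarith
  rw [infoMatrix_BK_uniform hK hKN.le (by omega), invInfoUniformBK, completelySymmetric_mul,
    Fintype.card_fin]
  convert (show completelySymmetric (Fin N) 1 0 = 1 by simp [completelySymmetric]) using 2
  · field_simp
  · field_simp
    ring

theorem trace_invInfoUniformBK (hK : 0 < K) (hKN : K < N) :
    (invInfoUniformBK N K).trace = (N : ℝ) / K + N * ((N : ℝ) - 1) ^ 2 / ((N : ℝ) - K) := by
  have hK0 : (K : ℝ) ≠ 0 := by exact_mod_cast hK.ne'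
  have hNK0 : (N : ℝ) - K ≠ 0 := by linarith [(by exact_mod_cast hKN : (K : ℝ) < N)]
  rw [invInfoUniformBK, trace_completelySymmetric, Fintype.card_fin]
  field_simp
  ring

theorem sum_invInfoUniformBK_mulVec_indicatorVec_sq_div_le (hK : 0 < K) (hKN : K < N)
    {s : Finset (Fin N)} (hs : K ≤ #s) :
    (∑ i, (invInfoUniformBK N K *ᵥ indicatorVec s) i ^ 2) / ∑ i, indicatorVec s i ^ 2 ≤
      (N : ℝ) / K + N * ((N : ℝ) - 1) ^ 2 / ((N : ℝ) - K) := by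
  have hK1 : (1 : ℝ) ≤ K := by exact_mod_cast hK
  have hNK : (K : ℝ) + 1 ≤ N := by exact_mod_cast hKN
  have hKs : (K : ℝ) ≤ #s := by exact_mod_cast hs
  have hNK0 : (0 : ℝ) < N - K := by linarith
  set d₁ : ℝ := N * (N - 1) / (N - K) with hd₁
  set d₂ : ℝ := -(N * (K - 1)) / (K * (N - K)) with hd₂
  have hslope : 2 * d₁ * d₂ + N * d₂ ^ 2 =
      -(N ^ 2 * (K - 1) * (K * (N - 2) + N) / (K ^ 2 * (N - K) ^ 2)) := by
    rw [hd₁, hd₂]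
    field_simp
    ring
  have hslope_nonpos : 2 * d₁ * d₂ + N * d₂ ^ 2 ≤ 0 := by
    rw [hslope, neg_nonpos]
    apply div_nonneg _ (by positivity)
    exact mul_nonneg (mul_nonneg (sq_nonneg _) (by linarith)) (by nlinarith)
  -- For `x ∈ B_m` the ratio is affine in `m` with nonpositive slope, and equals `tr A` at `m = K`.
  have hvalue : d₁ ^ 2 + (2 * d₁ * d₂ + N * d₂ ^ 2) * K =
      (N : ℝ) / K + N * ((N : ℝ) - 1) ^ 2 / ((N : ℝ) - K) := by
    rw [hd₁, hd₂]
    field_simp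
    ring
  rw [invInfoUniformBK, sum_completelySymmetric_mulVec_indicatorVec_sq, sum_indicatorVec_sq,
    Fintype.card_fin, mul_div_cancel_left₀ _ (by linarith), ← hvalue]
  linarith [mul_le_mul_of_nonpos_left hKs hslope_nonpos]

end UniformDesign

open Classical in
theorem uniform_on_BK_optimal_on_union_general (N K : ℕ) (hK1 : 1 ≤ K) (hKN : K < N) :
    let X : Finset (Fin N → ℝ) := (Finset.Icc K N).biUnion (fun i => BK N i)
    let q : (Fin N → ℝ) → ℝ := fun x => if x ∈ BK N K then (N.choose K : ℝ)⁻¹ else 0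
    (∀ x ∈ X, 0 ≤ q x) ∧ (∑ x ∈ X, q x) = 1 ∧
    IsUnit (infoMatrix X q) ∧
    (infoMatrix X q)⁻¹.trace = (N : ℝ) / K + N * ((N : ℝ) - 1) ^ 2 / ((N : ℝ) - K) ∧
    (∀ p : (Fin N → ℝ) → ℝ, (∀ x ∈ X, 0 ≤ p x) → (∑ x ∈ X, p x) = 1 →
      IsUnit (infoMatrix X p) →
      (infoMatrix X q)⁻¹.trace ≤ (infoMatrix X p)⁻¹.trace) := by
  intro X q
  have hBK : BK N K ⊆ X := subset_biUnion_of_mem (BK N) (mem_Icc.mpr ⟨le_rfl, hKN.le⟩)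
  have hinv : infoMatrix X q * invInfoUniformBK N K = 1 := by
    rw [infoMatrix_ite_mem hBK]
    exact infoMatrix_BK_uniform_mul_invInfoUniformBK hK1 hKN
  have htrace :
      (infoMatrix X q)⁻¹.trace = (N : ℝ) / K + N * ((N : ℝ) - 1) ^ 2 / ((N : ℝ) - K) := by
    rw [inv_eq_right_inv hinv, trace_invInfoUniformBK hK1 hKN]
  refine ⟨fun x _ => ?_, ?_, IsUnit.of_mul_eq_one _ hinv, htrace, fun p hp hp1 hpM => ?_⟩
  · dsimp only [q]
    split_ifs <;> positivity
  · have hC : (N.choose K : ℝ) ≠ 0 := by exact_mod_cast (Nat.choose_pos hKN.le).ne'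
    rw [sum_ite_mem, inter_eq_right.mpr hBK, sum_const, card_BK, nsmul_eq_mul, mul_inv_cancel₀ hC]
  · have hopt := two_mul_trace_sub_le_trace_inv_infoMatrix (transpose_completelySymmetric _ _)
      hp hp1 hpM fun x hx => by
        obtain ⟨s, hs, rfl⟩ := exists_indicatorVec_of_mem_biUnion_BK hx
        exact sum_invInfoUniformBK_mulVec_indicatorVec_sq_div_le hK1 hKN hs
    rw [← invInfoUniformBK, trace_invInfoUniformBK hK1 hKN] at hopt
    linarith

open Classical in
/-- on `X = ∪_{i=K}^{N} B_i`, the distribution which is uniform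
on `B_K` and zero elsewhere is a minimizer of `trace(M(p)⁻¹)` over all
probability distributions on `X` with invertible information matrix, and the
minimum value is `N/K + N(N-1)²/(N-K)`. -/
theorem uniform_on_BK_optimal_on_union (N K : ℕ) (hN : 2 ≤ N) (hK1 : 1 ≤ K) (hKN : K < N) :
    let X : Finset (Fin N → ℝ) := (Finset.Icc K N).biUnion (fun i => BK N i)
    let q : (Fin N → ℝ) → ℝ := fun x => if x ∈ BK N K then (N.choose K : ℝ)⁻¹ else 0
    (∀ x ∈ X, 0 ≤ q x) ∧ (∑ x ∈ X, q x) = 1 ∧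
    IsUnit (infoMatrix X q) ∧
    (infoMatrix X q)⁻¹.trace = (N : ℝ) / K + N * ((N : ℝ) - 1) ^ 2 / ((N : ℝ) - K) ∧
    (∀ p : (Fin N → ℝ) → ℝ, (∀ x ∈ X, 0 ≤ p x) → (∑ x ∈ X, p x) = 1 →
      IsUnit (infoMatrix X p) →
      (infoMatrix X q)⁻¹.trace ≤ (infoMatrix X p)⁻¹.trace) :=
  uniform_on_BK_optimal_on_union_general N K hK1 hKN
end
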